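/- arXiv:1310.3063 — 9 statements merged into one kernel-verified Lean document; each statement's English description precedes it below -/
import Mathlib

section
/- If f:(0,1)→ℝ is a continuous Seiffert function, then I(f)(z) := ∫₀^z f(u)/u du satisfies z/(1+z) ≤ I(f)(z) ≤ z/(1-z) for all z ∈ (0,1); in particular I(f) is again a Seiffert function. -/
open MeasureTheory Set

theorem stmt_2 (f : ℝ → ℝ) (hc : ContinuousOn f (Set.Ioo 0 1))
    (hf : ∀ z ∈ Set.Ioo (0:ℝ) 1, z / (1 + z) ≤ f z ∧ f z ≤ z / (1 - z)) :
    ∀ z ∈ Set.Ioo (0:ℝ) 1,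
      z / (1 + z) ≤ ∫ u in (0:ℝ)..z, f u / u ∧ (∫ u in (0:ℝ)..z, f u / u) ≤ z / (1 - z) := by
  intro z hz
  obtain ⟨hz0, hz1⟩ := hz
  have key : ∀ u ∈ Set.Ioo (0:ℝ) z, 1/(1+z) ≤ f u / u ∧ f u / u ≤ 1/(1-z) := by
    rintro u ⟨hu0, huz⟩
    have hu1 : u < 1 := huz.trans hz1
    obtain ⟨h1, h2⟩ := hf u ⟨hu0, hu1⟩
    have h1' : u ≤ f u * (1 + u) := (div_le_iff₀ (by linarith)).mp h1
    have h2' : f u * (1 - u) ≤ u := by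
      have := (le_div_iff₀ (by linarith : (0:ℝ) < 1 - u)).mp h2
      linarith
    have hfu0 : 0 ≤ f u := le_trans (div_nonneg hu0.le (by linarith)) h1
    constructor
    · rw [div_le_div_iff₀ (by linarith) hu0]
      nlinarith [mul_le_mul_of_nonneg_left huz.le hfu0]
    · rw [div_le_div_iff₀ hu0 (by linarith : (0:ℝ) < 1 - z)]
      nlinarith [mul_nonneg hfu0 (by linarith : (0:ℝ) ≤ z - u)]
  have hmeas : AEStronglyMeasurable (fun u => f u / u) (volume.restrict (Set.Ioo 0 z)) := by
    apply ContinuousOn.aestronglyMeasurable ?_ measurableSet_Ioo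
    apply ContinuousOn.div (hc.mono ?_) continuousOn_id ?_
    · intro u hu; exact ⟨hu.1, hu.2.trans hz1⟩
    · intro u hu; exact hu.1.ne'
  have hint : IntervalIntegrable (fun u => f u / u) volume 0 z := by
    rw [intervalIntegrable_iff_integrableOn_Ioo_of_le hz0.le]
    refine ⟨hmeas, HasFiniteIntegral.restrict_of_bounded (C := 1/(1-z)) measure_Ioo_lt_top ?_⟩
    filter_upwards [ae_restrict_mem measurableSet_Ioo] with u hu
    have h := key u hu
    have h1 : (0:ℝ) < 1/(1+z) := by positivity
    rw [Real.norm_eq_abs, abs_le]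
    exact ⟨by linarith [h.1], h.2⟩
  have hmem : ∀ᵐ u ∂volume.restrict (Set.Icc 0 z), u ∈ Set.Ioo 0 z := by
    have h0 : volume ({0, z} : Set ℝ) = 0 :=
      (Set.toFinite _).measure_zero volume
    have h0' : ∀ᵐ u : ℝ, u ∉ ({0, z} : Set ℝ) :=
      measure_eq_zero_iff_ae_notMem.mp h0
    filter_upwards [ae_restrict_mem measurableSet_Icc, ae_restrict_of_ae h0'] with u hu hnu
    simp only [Set.mem_insert_iff, Set.mem_singleton_iff, not_or] at hnu
    exact ⟨lt_of_le_of_ne hu.1 (Ne.symm hnu.1), lt_of_le_of_ne hu.2 hnu.2⟩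
  constructor
  · have : z / (1 + z) = ∫ _ in (0:ℝ)..z, 1/(1+z) := by
      rw [intervalIntegral.integral_const, smul_eq_mul, sub_zero]; ring
    rw [this]
    apply intervalIntegral.integral_mono_ae_restrict hz0.le intervalIntegrable_const hint
    filter_upwards [hmem] with u hu
    exact (key u hu).1
  · have : z / (1 - z) = ∫ _ in (0:ℝ)..z, 1/(1-z) := by
      rw [intervalIntegral.integral_const, smul_eq_mul, sub_zero]; ring
    rw [this]
    apply intervalIntegral.integral_mono_ae_restrict hz0.le hint intervalIntegrable_const
    filter_upwards [hmem] with u hu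
    exact (key u hu).2
end

section
/- For all z ∈ (0,1), (1+z)·cos z > 1; consequently 1/(1+z) ≤ cos z ≤ 1/(1-z), so f(z) = z·cos z is a Seiffert function. -/
theorem stmt_7 :
    ∀ z ∈ Set.Ioo (0:ℝ) 1,
      1 < (1 + z) * Real.cos z ∧
      (1 / (1 + z) ≤ Real.cos z ∧ Real.cos z ≤ 1 / (1 - z)) ∧
      (z / (1 + z) ≤ z * Real.cos z ∧ z * Real.cos z ≤ z / (1 - z)) := by
  intro z ⟨hz0, hz1⟩
  have hc : 1 - z ^ 2 / 2 < Real.cos z := Real.one_sub_sq_div_two_lt_cos (by positivity)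
  have h1 : 1 < (1 + z) * Real.cos z := by nlinarith
  have hle1 : Real.cos z ≤ 1 := Real.cos_le_one z
  have h2 : 1 / (1 + z) ≤ Real.cos z := by
    rw [div_le_iff₀ (by linarith)]; nlinarith
  have h3 : Real.cos z ≤ 1 / (1 - z) := by
    rw [le_div_iff₀ (by linarith)]; nlinarith
  refine ⟨h1, ⟨h2, h3⟩, ?_, ?_⟩
  · rw [div_le_iff₀ (by linarith)]; nlinarith
  · rw [le_div_iff₀ (by linarith)]; nlinarith
end

section
/- The mean M(x,y) = (x-y)/(2 sinh((x-y)/(x+y))) does not admit a harmonic representation: specifically, the derivative of tanh fails the condition 1/(1+z) ≤ (tanh)'(z) on (0,1), since 1/cosh²(z) < 1/(1+z) for z close to 1 (e.g. 1/cosh²(1) < 1/2). -/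
/-!
Since `tanh' = 1 / cosh ^ 2`, it suffices to find `z ∈ (0, 1)` with `1 + z < cosh z ^ 2`.
Everything follows from `1 < sinh 1`: it gives `cosh 1 ^ 2 = 1 + sinh 1 ^ 2 > 2`, and for
`z = arsinh 1 < 1` it gives `cosh z ^ 2 = 1 + sinh z ^ 2 = 2 > 1 + z`.
-/

open Real Set

theorem Real.hasDerivAt_tanh (x : ℝ) : HasDerivAt tanh (1 / cosh x ^ 2) x := by
  have h := (hasDerivAt_sinh x).div (hasDerivAt_cosh x) (cosh_pos x).ne'
  rw [← sq, ← sq, cosh_sq_sub_sinh_sq] at h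
  exact h.congr_of_eventuallyEq (.of_forall fun y => tanh_eq_sinh_div_cosh y)

theorem Real.deriv_tanh (x : ℝ) : deriv tanh x = 1 / cosh x ^ 2 :=
  (hasDerivAt_tanh x).deriv

lemma one_lt_sinh_one : 1 < sinh 1 :=
  self_lt_sinh_iff.2 one_pos

lemma two_lt_cosh_one_sq : 2 < cosh 1 ^ 2 := by
  rw [cosh_sq']
  nlinarith [one_lt_sinh_one]

lemma arsinh_one_mem_Ioo : arsinh 1 ∈ Ioo (0 : ℝ) 1 :=
  ⟨arsinh_pos_iff.2 one_pos,
    by simpa only [arsinh_sinh] using arsinh_lt_arsinh.2 one_lt_sinh_one⟩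

lemma one_add_arsinh_one_lt_cosh_sq : 1 + arsinh 1 < cosh (arsinh 1) ^ 2 := by
  rw [cosh_sq', sinh_arsinh]
  linarith [arsinh_one_mem_Ioo.2]

theorem stmt_10 :
    (1 / Real.cosh 1 ^ 2 < 1 / 2) ∧
    ¬ (∀ z ∈ Set.Ioo (0:ℝ) 1, 1 / (1 + z) ≤ deriv Real.tanh z) ∧
    ¬ (∀ z ∈ Set.Ioo (0:ℝ) 1, 1 / (1 + z) ≤ 1 / Real.cosh z ^ 2) := by
  have not_le_sech_sq : ¬ ∀ z ∈ Ioo (0 : ℝ) 1, 1 / (1 + z) ≤ 1 / cosh z ^ 2 := fun h =>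
    (one_div_lt_one_div_of_lt (by linarith [arsinh_one_mem_Ioo.1])
      one_add_arsinh_one_lt_cosh_sq).not_ge (h _ arsinh_one_mem_Ioo)
  refine ⟨one_div_lt_one_div_of_lt two_pos two_lt_cosh_one_sq, fun h => ?_, not_le_sech_sq⟩
  exact not_le_sech_sq fun z hz => deriv_tanh z ▸ h z hz
end

section
/- Let K(z) = ∫₀^{π/2} dφ/√(1 - z² sin²φ) for z ∈ (0,1), and let f(z) = (2/π)·z·K(z). Then 1 < f'(z) < 1/(1-z) for all z ∈ (0,1); in particular f is a Seiffert function whose derivative satisfies the harmonic-representation criterion. -/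
noncomputable def Kell (z : ℝ) : ℝ :=
  ∫ φ in (0:ℝ)..(Real.pi / 2), 1 / Real.sqrt (1 - z ^ 2 * Real.sin φ ^ 2)

/-!
Writing `Δ = 1 - z² sin² φ` and `E(z) = ∫₀^{π/2} √Δ dφ`, differentiation under the integral sign
gives `(z K(z))' = ∫₀^{π/2} Δ^{-3/2} dφ`, and integrating
`z² (sin φ cos φ / √Δ)' = √Δ - (1 - z²) Δ^{-3/2}` over `[0, π/2]` turns this into
`(z K(z))' = E(z) / (1 - z²)`. Since `1 - z² ≤ Δ ≤ √Δ ≤ 1`, with strict inequality at `φ = 0`,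
`(1 - z²) π/2 < E(z) ≤ π/2`, so `1 < (2/π) (z K(z))' ≤ 1/(1 - z²) < 1/(1 - z)`.
-/

open Real MeasureTheory intervalIntegral

noncomputable def Eell (z : ℝ) : ℝ :=
  ∫ φ in (0:ℝ)..(π / 2), √(1 - z ^ 2 * sin φ ^ 2)

lemma one_sub_sq_le_one_sub_sq_mul_sin_sq {x r : ℝ} (h : x ^ 2 ≤ r ^ 2) (φ : ℝ) :
    1 - r ^ 2 ≤ 1 - x ^ 2 * sin φ ^ 2 := by
  nlinarith [sin_sq_le_one φ, sq_nonneg x]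

lemma one_sub_sq_mul_sin_sq_pos {x : ℝ} (hx : x ^ 2 < 1) (φ : ℝ) :
    0 < 1 - x ^ 2 * sin φ ^ 2 :=
  (sub_pos.2 hx).trans_le (one_sub_sq_le_one_sub_sq_mul_sin_sq le_rfl φ)

lemma continuous_sqrt_one_sub_sq_mul_sin_sq (x : ℝ) :
    Continuous fun φ => √(1 - x ^ 2 * sin φ ^ 2) := by
  fun_prop

lemma continuous_inv_mul_sqrt_one_sub_sq_mul_sin_sq {x : ℝ} (hx : x ^ 2 < 1) :
    Continuous fun φ => ((1 - x ^ 2 * sin φ ^ 2) * √(1 - x ^ 2 * sin φ ^ 2))⁻¹ := by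
  refine ((by fun_prop : Continuous fun φ => 1 - x ^ 2 * sin φ ^ 2).mul
    (continuous_sqrt_one_sub_sq_mul_sin_sq x)).inv₀ fun φ => ?_
  have hw := one_sub_sq_mul_sin_sq_pos hx φ
  exact (mul_pos hw (sqrt_pos.2 hw)).ne'

lemma hasDerivAt_div_sqrt_one_sub_sq_mul {x s : ℝ} (hx : x ^ 2 * s ^ 2 < 1) :
    HasDerivAt (fun y => y / √(1 - y ^ 2 * s ^ 2))
      (((1 - x ^ 2 * s ^ 2) * √(1 - x ^ 2 * s ^ 2))⁻¹) x := by
  have hw : 0 < 1 - x ^ 2 * s ^ 2 := by linarith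
  have hsq : √(1 - x ^ 2 * s ^ 2) ^ 2 = 1 - x ^ 2 * s ^ 2 := sq_sqrt hw.le
  have hdw : HasDerivAt (fun y => 1 - y ^ 2 * s ^ 2) (-(2 * x * s ^ 2)) x := by
    simpa using ((hasDerivAt_pow 2 x).mul_const (s ^ 2)).const_sub 1
  refine ((hasDerivAt_id x).div ((hasDerivAt_sqrt hw.ne').comp x hdw)
    (sqrt_pos.2 hw).ne').congr_deriv ?_
  simp only [id, Function.comp_apply]
  field_simp
  linear_combination (-(x ^ 2 * s ^ 2)) * hsq

lemma inv_mul_sqrt_one_sub_sq_mul_sin_sq_le {x r : ℝ} (hxr : x ^ 2 ≤ r ^ 2) (hr : r ^ 2 < 1)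
    (φ : ℝ) :
    ((1 - x ^ 2 * sin φ ^ 2) * √(1 - x ^ 2 * sin φ ^ 2))⁻¹ ≤ ((1 - r ^ 2) * √(1 - r ^ 2))⁻¹ := by
  have hle := one_sub_sq_le_one_sub_sq_mul_sin_sq hxr φ
  have hr' : 0 < 1 - r ^ 2 := sub_pos.2 hr
  exact inv_anti₀ (by positivity)
    (mul_le_mul hle (sqrt_le_sqrt hle) (sqrt_nonneg _) (hr'.le.trans hle))

lemma hasDerivAt_mul_Kell_integral {z : ℝ} (hz : |z| < 1) :
    HasDerivAt (fun x => x * Kell x)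
      (∫ φ in (0:ℝ)..(π / 2), ((1 - z ^ 2 * sin φ ^ 2) * √(1 - z ^ 2 * sin φ ^ 2))⁻¹) z := by
  set r := (1 + |z|) / 2 with hr_def
  have hr : r ^ 2 < 1 := by
    rw [sq_lt_one_iff_abs_lt_one, abs_lt]; constructor <;> linarith [abs_nonneg z, hr_def]
  have hmem : Set.Ioo (-r) r ∈ nhds z :=
    Ioo_mem_nhds (by linarith [neg_abs_le z, hr_def]) (by linarith [le_abs_self z, hr_def])
  have hsq : ∀ x ∈ Set.Ioo (-r) r, x ^ 2 ≤ r ^ 2 := fun x hx =>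
    sq_le_sq' hx.1.le hx.2.le
  have hz2 : z ^ 2 < 1 := (hsq z (mem_of_mem_nhds hmem)).trans_lt hr
  have hF_int : IntervalIntegrable (fun φ => z / √(1 - z ^ 2 * sin φ ^ 2)) volume 0 (π / 2) :=
    (continuous_const.div (continuous_sqrt_one_sub_sq_mul_sin_sq z) fun φ =>
      (sqrt_pos.2 (one_sub_sq_mul_sin_sq_pos hz2 φ)).ne').intervalIntegrable _ _
  have key := hasDerivAt_integral_of_dominated_loc_of_deriv_le (μ := volume)
    (a := 0) (b := π / 2) (bound := fun _ => ((1 - r ^ 2) * √(1 - r ^ 2))⁻¹)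
    (F := fun x φ => x / √(1 - x ^ 2 * sin φ ^ 2))
    (F' := fun x φ => ((1 - x ^ 2 * sin φ ^ 2) * √(1 - x ^ 2 * sin φ ^ 2))⁻¹) hmem
    (Filter.Eventually.of_forall fun x => (by fun_prop : Measurable _).aestronglyMeasurable) hF_int
    (continuous_inv_mul_sqrt_one_sub_sq_mul_sin_sq hz2).aestronglyMeasurable
    (Filter.Eventually.of_forall fun φ _ x hx => by
      have hw := one_sub_sq_mul_sin_sq_pos ((hsq x hx).trans_lt hr) φ
      rw [norm_of_nonneg (by positivity)]
      exact inv_mul_sqrt_one_sub_sq_mul_sin_sq_le (hsq x hx) hr φ)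
    intervalIntegrable_const
    (Filter.Eventually.of_forall fun φ _ x hx =>
      hasDerivAt_div_sqrt_one_sub_sq_mul (by nlinarith [one_sub_sq_mul_sin_sq_pos hr φ, hsq x hx]))
  have hKell :
      (fun x => x * Kell x) = fun x => ∫ φ in (0:ℝ)..(π / 2), x / √(1 - x ^ 2 * sin φ ^ 2) := by
    ext x
    simp only [Kell, ← intervalIntegral.integral_const_mul, mul_one_div]
  exact hKell ▸ key.2

lemma hasDerivAt_sq_mul_sin_mul_cos_div_sqrt {z : ℝ} (hz : z ^ 2 < 1) (φ : ℝ) :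
    HasDerivAt (fun t => z ^ 2 * (sin t * cos t / √(1 - z ^ 2 * sin t ^ 2)))
      (√(1 - z ^ 2 * sin φ ^ 2)
        - (1 - z ^ 2) * ((1 - z ^ 2 * sin φ ^ 2) * √(1 - z ^ 2 * sin φ ^ 2))⁻¹) φ := by
  have hw := one_sub_sq_mul_sin_sq_pos hz φ
  have hsq : √(1 - z ^ 2 * sin φ ^ 2) ^ 2 = 1 - z ^ 2 * sin φ ^ 2 := sq_sqrt hw.le
  have hdw : HasDerivAt (fun t => 1 - z ^ 2 * sin t ^ 2) (-(z ^ 2 * (2 * sin φ * cos φ))) φ := by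
    simpa [mul_assoc, mul_comm, mul_left_comm] using
      (((hasDerivAt_sin φ).pow 2).const_mul (z ^ 2)).const_sub 1
  refine ((((hasDerivAt_sin φ).mul (hasDerivAt_cos φ)).div
    ((hasDerivAt_sqrt hw.ne').comp φ hdw) (sqrt_pos.2 hw).ne').const_mul (z ^ 2)).congr_deriv ?_
  simp only [Function.comp_apply, Pi.mul_apply]
  field_simp
  rw [hsq]
  linear_combination z ^ 2 * (1 - z ^ 2 * sin φ ^ 2) * sin_sq_add_cos_sq φ

lemma Eell_eq_one_sub_sq_mul_integral {z : ℝ} (hz : z ^ 2 < 1) :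
    Eell z = (1 - z ^ 2) *
      ∫ φ in (0:ℝ)..(π / 2), ((1 - z ^ 2 * sin φ ^ 2) * √(1 - z ^ 2 * sin φ ^ 2))⁻¹ := by
  have hFTC := integral_eq_sub_of_hasDerivAt (a := 0) (b := π / 2)
    (fun φ _ => hasDerivAt_sq_mul_sin_mul_cos_div_sqrt hz φ)
    (((continuous_sqrt_one_sub_sq_mul_sin_sq z).sub
      (continuous_const.mul (continuous_inv_mul_sqrt_one_sub_sq_mul_sin_sq hz))).intervalIntegrable _ _)
  rw [integral_sub ((continuous_sqrt_one_sub_sq_mul_sin_sq z).intervalIntegrable _ _)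
    (((continuous_inv_mul_sqrt_one_sub_sq_mul_sin_sq hz).intervalIntegrable _ _).const_mul _),
    intervalIntegral.integral_const_mul] at hFTC
  simp only [cos_pi_div_two, sin_zero, mul_zero, zero_mul, zero_div, sub_self] at hFTC
  rw [Eell]
  linarith

lemma hasDerivAt_mul_Kell {z : ℝ} (hz : |z| < 1) :
    HasDerivAt (fun x => x * Kell x) (Eell z / (1 - z ^ 2)) z := by
  have hz2 : z ^ 2 < 1 := (sq_lt_one_iff_abs_lt_one z).2 hz
  rw [Eell_eq_one_sub_sq_mul_integral hz2, mul_div_cancel_left₀ _ (sub_pos.2 hz2).ne']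
  exact hasDerivAt_mul_Kell_integral hz

lemma Eell_le (z : ℝ) : Eell z ≤ π / 2 := by
  have h := integral_mono_on (μ := volume) (a := 0) (b := π / 2) (g := fun _ => (1 : ℝ))
    (by positivity)
    ((continuous_sqrt_one_sub_sq_mul_sin_sq z).intervalIntegrable _ _) intervalIntegrable_const
    fun φ _ => sqrt_le_one.2 (by nlinarith [sq_nonneg (z * sin φ)])
  simpa [Eell] using h

lemma one_sub_sq_mul_lt_Eell {z : ℝ} (hz : z ≠ 0) : (1 - z ^ 2) * (π / 2) < Eell z := by
  have h := integral_lt_integral_of_continuousOn_of_le_of_exists_lt (f := fun _ => 1 - z ^ 2)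
    (by positivity : (0 : ℝ) < π / 2) continuousOn_const
    (continuous_sqrt_one_sub_sq_mul_sin_sq z).continuousOn
    (fun φ _ => (one_sub_sq_le_one_sub_sq_mul_sin_sq le_rfl φ).trans
      (le_sqrt_self_iff.2 (by nlinarith [sq_nonneg (z * sin φ)])))
    ⟨0, ⟨le_rfl, by positivity⟩, by simpa using sq_pos_of_ne_zero hz⟩
  simp only [intervalIntegral.integral_const, sub_zero, smul_eq_mul] at h
  rwa [Eell, mul_comm]

theorem stmt_11 :
    ∀ z ∈ Set.Ioo (0:ℝ) 1,
      1 < deriv (fun z => (2 / Real.pi) * z * Kell z) z ∧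
      deriv (fun z => (2 / Real.pi) * z * Kell z) z < 1 / (1 - z) := by
  intro z ⟨hz0, hz1⟩
  have hz2 : 0 < 1 - z ^ 2 := by nlinarith
  have hderiv : deriv (fun z => (2 / π) * z * Kell z) z = 2 / π * (Eell z / (1 - z ^ 2)) := by
    simpa only [mul_assoc] using
      ((hasDerivAt_mul_Kell (abs_lt.2 ⟨by linarith, hz1⟩)).const_mul (2 / π)).deriv
  rw [hderiv]
  constructor
  · calc 1 = 2 / π * ((1 - z ^ 2) * (π / 2) / (1 - z ^ 2)) := by field_simp
      _ < 2 / π * (Eell z / (1 - z ^ 2)) := by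
        gcongr
        exact one_sub_sq_mul_lt_Eell hz0.ne'
  · calc 2 / π * (Eell z / (1 - z ^ 2)) ≤ 2 / π * ((π / 2) / (1 - z ^ 2)) := by
          gcongr
          exact Eell_le z
      _ = 1 / (1 - z ^ 2) := by field_simp
      _ < 1 / (1 - z) := one_div_lt_one_div_of_lt (by linarith) (by nlinarith)
end

section
/- Let n:(0,1)→ℝ be a continuous Seiffert function such that u ↦ n(u)/u is convex and n(u)/u → 1 as u → 0. Then for all z ∈ (0,1): 2n(z/2) ≤ ∫₀^z n(u)/u du ≤ (z + n(z))/2. -/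
/-!
Write `g u = n u / u`. Averaging the midpoint inequality `2 g (z/2) ≤ g u + g (z - u)` over
`(0, z)` gives the lower bound. For the upper bound, `g` lies below its chord from `(0, 1)` to
`(z, g z)`: this is the slope inequality of a convex function with its left point sent to `0`,
where `g → 1`. Integrability holds because `g`, being convex on an open interval, is continuous
there and extends continuously to `0` by the value `1`.
-/

open Set Filter Topology MeasureTheory

theorem integral_chord {a b : ℝ} (hab : a ≠ b) (p q : ℝ) :
    ∫ x in a..b, ((b - x) * p + (x - a) * q) / (b - a) = (b - a) * (p + q) / 2 := by
  have hba : b - a ≠ 0 := sub_ne_zero.2 hab.symm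
  have haffine : ∀ x : ℝ, ((b - x) * p + (x - a) * q) / (b - a) =
      (b * p - a * q) / (b - a) + (q - p) / (b - a) * x := fun x => by
    field_simp
    ring
  simp only [haffine]
  rw [intervalIntegral.integral_add intervalIntegrable_const
      (intervalIntegral.intervalIntegrable_id.const_mul _), intervalIntegral.integral_const_mul,
    intervalIntegral.integral_const, integral_id, smul_eq_mul]
  field_simp
  ring

namespace ConvexOn

variable {f : ℝ → ℝ} {a b L : ℝ}

theorem intervalIntegrable_of_tendsto_nhdsGT {c : ℝ} (hf : ConvexOn ℝ (Ioo a c) f)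
    (hL : Tendsto f (𝓝[>] a) (𝓝 L)) (hb : b ∈ Ioo a c) : IntervalIntegrable f volume a b := by
  classical
  have hcont : ContinuousOn (Function.update f a L) (Icc a b) := by
    intro x hx
    rcases hx.1.eq_or_lt with rfl | hax
    · rw [continuousWithinAt_update_same]
      exact hL.mono_left (nhdsWithin_mono _ fun y hy => lt_of_le_of_ne hy.1.1 (Ne.symm hy.2))
    · rw [continuousWithinAt_update_of_ne hax.ne']
      exact ((hf.continuousOn isOpen_Ioo).continuousAt
        (Ioo_mem_nhds hax (hx.2.trans_lt hb.2))).continuousWithinAt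
  refine (hcont.intervalIntegrable_of_Icc hb.1.le).congr fun x hx => ?_
  rw [uIoc_of_le hb.1.le] at hx
  exact Function.update_of_ne hx.1.ne' _ _

theorem mul_midpoint_le_intervalIntegral (hab : a ≤ b) (hf : ConvexOn ℝ (Ioo a b) f)
    (hint : IntervalIntegrable f volume a b) :
    (b - a) * f ((a + b) / 2) ≤ ∫ x in a..b, f x := by
  have hmid : ∀ x ∈ Ioo a b, 2 * f ((a + b) / 2) ≤ f x + f (a + b - x) := by
    intro x hx
    have hx' : a + b - x ∈ Ioo a b := ⟨by linarith [hx.2], by linarith [hx.1]⟩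
    have hconv := hf.2 hx hx' (by norm_num : (0 : ℝ) ≤ 1 / 2) (by norm_num : (0 : ℝ) ≤ 1 / 2)
      (by norm_num)
    simp only [smul_eq_mul] at hconv
    rw [show 1 / 2 * x + 1 / 2 * (a + b - x) = (a + b) / 2 by ring] at hconv
    linarith
  have hreflect : ∫ x in a..b, f (a + b - x) = ∫ x in a..b, f x := by
    simp [intervalIntegral.integral_comp_sub_left]
  have hint' : IntervalIntegrable (fun x => f (a + b - x)) volume a b := by
    simpa using (hint.comp_sub_left (a + b)).symm
  have hmono := intervalIntegral.integral_mono_on_of_le_Ioo hab intervalIntegrable_const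
    (hint.add hint') hmid
  rw [intervalIntegral.integral_const, intervalIntegral.integral_add hint hint', hreflect,
    smul_eq_mul] at hmono
  linarith

theorem mul_le_of_tendsto_nhdsGT (hf : ConvexOn ℝ (Ioc a b) f) (hL : Tendsto f (𝓝[>] a) (𝓝 L))
    {u : ℝ} (hu : u ∈ Ioc a b) : (b - a) * f u ≤ (b - u) * L + (u - a) * f b := by
  rcases hu.2.eq_or_lt with rfl | hub
  · simp
  have hslope : (f u - L) / (u - a) ≤ (f b - f u) / (b - u) := by
    refine le_of_tendsto ((tendsto_const_nhds.sub hL).div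
      (tendsto_const_nhds.sub (tendsto_nhdsWithin_of_tendsto_nhds tendsto_id))
      (sub_pos.2 hu.1).ne') ?_
    filter_upwards [Ioo_mem_nhdsGT hu.1] with x hx
    exact hf.slope_mono_adjacent ⟨hx.1, hx.2.le.trans hu.2⟩ ⟨hu.1.trans hub, le_rfl⟩ hx.2 hub
  rw [div_le_div_iff₀ (sub_pos.2 hu.1) (sub_pos.2 hub)] at hslope
  nlinarith [hu.1]

theorem intervalIntegral_le_of_tendsto_nhdsGT (hab : a < b) (hf : ConvexOn ℝ (Ioc a b) f)
    (hL : Tendsto f (𝓝[>] a) (𝓝 L)) (hint : IntervalIntegrable f volume a b) :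
    ∫ x in a..b, f x ≤ (b - a) * (L + f b) / 2 := by
  have hchord : ∀ x ∈ Ioo a b, f x ≤ ((b - x) * L + (x - a) * f b) / (b - a) := fun x hx => by
    rw [le_div_iff₀ (sub_pos.2 hab), mul_comm]
    exact hf.mul_le_of_tendsto_nhdsGT hL (Ioo_subset_Ioc_self hx)
  calc ∫ x in a..b, f x ≤ ∫ x in a..b, ((b - x) * L + (x - a) * f b) / (b - a) :=
        intervalIntegral.integral_mono_on_of_le_Ioo hab.le hint
          (Continuous.intervalIntegrable (by fun_prop) _ _) hchord
    _ = (b - a) * (L + f b) / 2 := integral_chord hab.ne L (f b)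

end ConvexOn

theorem stmt_14_general (n : ℝ → ℝ)
    (hconv : ConvexOn ℝ (Set.Ioo 0 1) (fun u => n u / u))
    (hlim : Filter.Tendsto (fun u => n u / u) (nhdsWithin 0 (Set.Ioi 0)) (nhds 1)) :
    ∀ z ∈ Set.Ioo (0:ℝ) 1,
      2 * n (z / 2) ≤ ∫ u in (0:ℝ)..z, n u / u ∧
      (∫ u in (0:ℝ)..z, n u / u) ≤ (z + n z) / 2 := by
  intro z hz
  have hint := hconv.intervalIntegrable_of_tendsto_nhdsGT hlim hz
  constructor
  · have hmid := (hconv.subset (Ioo_subset_Ioo_right hz.2.le) (convex_Ioo 0 z))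
      |>.mul_midpoint_le_intervalIntegral hz.1.le hint
    rw [sub_zero, zero_add] at hmid
    calc 2 * n (z / 2) = z * (n (z / 2) / (z / 2)) := by field_simp [hz.1.ne']
      _ ≤ _ := hmid
  · have hchord := (hconv.subset (Ioc_subset_Ioo_right hz.2) (convex_Ioc 0 z))
      |>.intervalIntegral_le_of_tendsto_nhdsGT hz.1 hlim hint
    rw [sub_zero] at hchord
    exact hchord.trans_eq (by field_simp [hz.1.ne'])

theorem stmt_14 (n : ℝ → ℝ) (hc : ContinuousOn n (Set.Ioo 0 1))
    (hs : ∀ z ∈ Set.Ioo (0:ℝ) 1, z / (1 + z) ≤ n z ∧ n z ≤ z / (1 - z))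
    (hconv : ConvexOn ℝ (Set.Ioo 0 1) (fun u => n u / u))
    (hlim : Filter.Tendsto (fun u => n u / u) (nhdsWithin 0 (Set.Ioi 0)) (nhds 1)) :
    ∀ z ∈ Set.Ioo (0:ℝ) 1,
      2 * n (z / 2) ≤ ∫ u in (0:ℝ)..z, n u / u ∧
      (∫ u in (0:ℝ)..z, n u / u) ≤ (z + n z) / 2 :=
  stmt_14_general n hconv hlim
end

section
/- For all u ∈ (0,1): 4u/(4+u²) > arctan u > u(2+u²)/(2+2u²). -/
/-!
Both bounds compare `arctan` with a rational function `r` agreeing with it at `0`.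
For the lower bound `(arctan - r)' = x²(1 - x²) / (2(1 + x²)²) > 0` on `(0, 1)`.
For the upper bound `(r - arctan)' = x²(4 - 5x²) / ((4 + x²)²(1 + x²))`, so `r - arctan` increases
up to `√(4/5)` and then decreases; it is positive on `(0, 1)` because it vanishes at `0` and
equals `4/5 - π/4 > 0` at `1`.
-/

open Real Set

lemma strictMonoOn_Icc_of_hasDerivAt_pos {f f' : ℝ → ℝ} {a b : ℝ}
    (hf : ∀ x, HasDerivAt f (f' x) x) (hf' : ∀ x ∈ Ioo a b, 0 < f' x) :
    StrictMonoOn f (Icc a b) :=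
  strictMonoOn_of_hasDerivWithinAt_pos (convex_Icc a b)
    (fun x _ ↦ (hf x).continuousAt.continuousWithinAt) (fun x _ ↦ (hf x).hasDerivWithinAt)
    (by simpa only [interior_Icc] using hf')

lemma strictAntiOn_Icc_of_hasDerivAt_neg {f f' : ℝ → ℝ} {a b : ℝ}
    (hf : ∀ x, HasDerivAt f (f' x) x) (hf' : ∀ x ∈ Ioo a b, f' x < 0) :
    StrictAntiOn f (Icc a b) :=
  strictAntiOn_of_hasDerivWithinAt_neg (convex_Icc a b)
    (fun x _ ↦ (hf x).continuousAt.continuousWithinAt) (fun x _ ↦ (hf x).hasDerivWithinAt)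
    (by simpa only [interior_Icc] using hf')

lemma min_lt_of_strictMonoOn_of_strictAntiOn {α β : Type*} [LinearOrder α] [LinearOrder β]
    {f : α → β} {a b c x : α} (hmono : StrictMonoOn f (Icc a c))
    (hanti : StrictAntiOn f (Icc c b)) (hx : x ∈ Ioo a b) : min (f a) (f b) < f x := by
  rcases le_or_gt x c with hxc | hcx
  · exact (min_le_left _ _).trans_lt
      (hmono ⟨le_rfl, hx.1.le.trans hxc⟩ ⟨hx.1.le, hxc⟩ hx.1)
  · exact (min_le_right _ _).trans_lt
      (hanti ⟨hcx.le, hx.2.le⟩ ⟨hcx.le.trans hx.2.le, le_rfl⟩ hx.2)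

lemma hasDerivAt_arctan_sub_mul_two_add_sq_div (x : ℝ) :
    HasDerivAt (fun x ↦ arctan x - x * (2 + x ^ 2) / (2 + 2 * x ^ 2))
      (x ^ 2 * (1 - x ^ 2) / (2 * (1 + x ^ 2) ^ 2)) x := by
  have hnum := (hasDerivAt_id' x).fun_mul ((hasDerivAt_pow 2 x).const_add 2)
  have hden := ((hasDerivAt_pow 2 x).const_mul 2).const_add 2
  refine ((hasDerivAt_arctan x).fun_sub (hnum.fun_div hden (by positivity))).congr_deriv ?_
  push_cast
  field_simp
  ring

lemma hasDerivAt_four_mul_div_four_add_sq_sub_arctan (x : ℝ) :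
    HasDerivAt (fun x ↦ 4 * x / (4 + x ^ 2) - arctan x)
      (x ^ 2 * (4 - 5 * x ^ 2) / ((4 + x ^ 2) ^ 2 * (1 + x ^ 2))) x := by
  have hnum := (hasDerivAt_id' x).const_mul 4
  have hden := (hasDerivAt_pow 2 x).const_add 4
  refine ((hnum.fun_div hden (by positivity)).fun_sub (hasDerivAt_arctan x)).congr_deriv ?_
  push_cast
  field_simp
  ring

lemma mul_two_add_sq_div_lt_arctan {u : ℝ} (hu : u ∈ Ioo 0 1) :
    u * (2 + u ^ 2) / (2 + 2 * u ^ 2) < arctan u := by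
  have hmono := strictMonoOn_Icc_of_hasDerivAt_pos (a := 0) (b := 1)
    hasDerivAt_arctan_sub_mul_two_add_sq_div fun x hx ↦ by
      have : x ^ 2 < 1 := pow_lt_one₀ hx.1.le hx.2 two_ne_zero
      exact div_pos (mul_pos (pow_pos hx.1 2) (by linarith)) (by positivity)
  simpa using hmono (left_mem_Icc.2 zero_le_one) (Ioo_subset_Icc_self hu) hu.1

lemma arctan_lt_four_mul_div_four_add_sq {u : ℝ} (hu : u ∈ Ioo 0 1) :
    arctan u < 4 * u / (4 + u ^ 2) := by
  have hmono := strictMonoOn_Icc_of_hasDerivAt_pos (a := 0) (b := √(4 / 5))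
    hasDerivAt_four_mul_div_four_add_sq_sub_arctan fun x hx ↦ by
      have : x ^ 2 < 4 / 5 := (lt_sqrt hx.1.le).1 hx.2
      exact div_pos (mul_pos (pow_pos hx.1 2) (by linarith)) (by positivity)
  have hanti := strictAntiOn_Icc_of_hasDerivAt_neg (a := √(4 / 5)) (b := 1)
    hasDerivAt_four_mul_div_four_add_sq_sub_arctan fun x hx ↦ by
      have hx0 : 0 < x := (sqrt_nonneg _).trans_lt hx.1
      have : 4 / 5 < x ^ 2 := (sqrt_lt' hx0).1 hx.1
      exact div_neg_of_neg_of_pos (mul_neg_of_pos_of_neg (pow_pos hx0 2) (by linarith))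
        (by positivity)
  have hmin := min_lt_of_strictMonoOn_of_strictAntiOn hmono hanti hu
  have hone : 0 < 4 * 1 / (4 + 1 ^ 2) - arctan 1 := by
    rw [arctan_one]
    linarith [pi_lt_d2]
  simp only [arctan_zero, mul_zero, zero_div, sub_zero, min_eq_left hone.le] at hmin
  linarith

theorem stmt_16 :
    ∀ u ∈ Set.Ioo (0:ℝ) 1,
      u * (2 + u ^ 2) / (2 + 2 * u ^ 2) < Real.arctan u ∧
      Real.arctan u < 4 * u / (4 + u ^ 2) :=
  fun _ hu ↦ ⟨mul_two_add_sq_div_lt_arctan hu, arctan_lt_four_mul_div_four_add_sq hu⟩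
end

section
/- For all u ∈ (0,1): 2u/√(u²+4) ≥ arsinh u ≥ u/2 + u/(2√(u²+1)). -/
/-!
Both differences `arsinh x - (x/2 + x/(2√(x²+1)))` and `2x/√(x²+4) - arsinh x` vanish at `0`.
With `s = √(x²+1)`, `t = √(x²+4)` their derivatives are `(s - 1)(s - x²)/(2s³)` and
`8/t³ - 1/s`; the first is nonnegative as long as `x⁴ ≤ x² + 1`, the second as long as
`t⁶ ≤ 64 s²`, i.e. `x²(x² + 12) ≤ 16`. Both conditions hold on `[0, 1]`.
-/

open Real Set

lemma le_of_hasDerivAt_nonneg {f f' : ℝ → ℝ} {a b : ℝ} (hab : a ≤ b)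
    (hf : ∀ x ∈ Icc a b, HasDerivAt f (f' x) x) (hf' : ∀ x ∈ Ioo a b, 0 ≤ f' x) :
    f a ≤ f b := by
  refine monotoneOn_of_hasDerivWithinAt_nonneg (convex_Icc a b)
    (fun x hx ↦ (hf x hx).continuousAt.continuousWithinAt)
    (fun x hx ↦ (hf x (interior_subset hx)).hasDerivWithinAt) (by simpa using hf')
    (left_mem_Icc.2 hab) (right_mem_Icc.2 hab) hab

lemma hasDerivAt_sqrt_sq_add {c : ℝ} (hc : 0 < c) (x : ℝ) :
    HasDerivAt (fun y ↦ √(y ^ 2 + c)) (x / √(x ^ 2 + c)) x := by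
  have hpos : 0 < x ^ 2 + c := by positivity
  convert ((hasDerivAt_pow 2 x).add_const c).sqrt hpos.ne' using 1
  field_simp
  ring

lemma hasDerivAt_arsinh_sub (x : ℝ) :
    HasDerivAt (fun y ↦ arsinh y - (y / 2 + y / (2 * √(y ^ 2 + 1))))
      ((√(x ^ 2 + 1) - 1) * (√(x ^ 2 + 1) - x ^ 2) / (2 * √(x ^ 2 + 1) ^ 3)) x := by
  have hs2 : √(x ^ 2 + 1) ^ 2 = x ^ 2 + 1 := sq_sqrt (by positivity)
  refine ((hasDerivAt_arsinh x).sub (((hasDerivAt_id x).div_const 2).add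
    ((hasDerivAt_id x).div ((hasDerivAt_sqrt_sq_add one_pos x).const_mul 2)
      (by positivity)))).congr_deriv ?_
  rw [add_comm 1, id]
  field_simp
  linear_combination (-√(x ^ 2 + 1)) * hs2

lemma hasDerivAt_sub_arsinh (x : ℝ) :
    HasDerivAt (fun y ↦ 2 * y / √(y ^ 2 + 4) - arsinh y)
      (8 / √(x ^ 2 + 4) ^ 3 - 1 / √(x ^ 2 + 1)) x := by
  have ht : 0 < √(x ^ 2 + 4) := by positivity
  have ht2 : √(x ^ 2 + 4) ^ 2 = x ^ 2 + 4 := sq_sqrt (by positivity)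
  refine ((((hasDerivAt_id x).const_mul 2).div (hasDerivAt_sqrt_sq_add four_pos x)
    ht.ne').sub (hasDerivAt_arsinh x)).congr_deriv ?_
  rw [add_comm 1, id]
  field_simp
  linear_combination 2 * √(x ^ 2 + 1) * ht2

theorem div_two_add_div_le_arsinh {u : ℝ} (hu : 0 ≤ u) (h : u ^ 4 ≤ u ^ 2 + 1) :
    u / 2 + u / (2 * √(u ^ 2 + 1)) ≤ arsinh u := by
  suffices arsinh 0 - (0 / 2 + 0 / (2 * √(0 ^ 2 + 1))) ≤
      arsinh u - (u / 2 + u / (2 * √(u ^ 2 + 1))) by simpa using this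
  refine le_of_hasDerivAt_nonneg hu (fun x _ ↦ hasDerivAt_arsinh_sub x) fun x ⟨hx0, hxu⟩ ↦ ?_
  have hx : x ^ 4 ≤ x ^ 2 + 1 := by
    rcases le_total (x ^ 2) 1 with hx1 | hx1
    · nlinarith
    · nlinarith [mul_le_mul_of_nonneg_left hxu.le hx0.le, mul_le_mul_of_nonneg_left hxu.le hu]
  have h1 : 1 ≤ √(x ^ 2 + 1) := one_le_sqrt.2 (by nlinarith)
  have h2 : x ^ 2 ≤ √(x ^ 2 + 1) := le_sqrt_of_sq_le (by linarith)
  exact div_nonneg (mul_nonneg (sub_nonneg.2 h1) (sub_nonneg.2 h2)) (by positivity)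

theorem arsinh_le_two_mul_div_sqrt {u : ℝ} (hu : 0 ≤ u) (h : u ^ 2 * (u ^ 2 + 12) ≤ 16) :
    arsinh u ≤ 2 * u / √(u ^ 2 + 4) := by
  suffices 2 * 0 / √(0 ^ 2 + 4) - arsinh 0 ≤ 2 * u / √(u ^ 2 + 4) - arsinh u by
    simpa using this
  refine le_of_hasDerivAt_nonneg hu (fun x _ ↦ hasDerivAt_sub_arsinh x) fun x ⟨hx0, hxu⟩ ↦ ?_
  have hs : 0 < √(x ^ 2 + 1) := by positivity
  have hx2 : x ^ 2 ≤ u ^ 2 := pow_le_pow_left₀ hx0.le hxu.le 2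
  have hsq : (√(x ^ 2 + 4) ^ 3) ^ 2 ≤ (8 * √(x ^ 2 + 1)) ^ 2 := by
    rw [mul_pow, ← pow_mul, pow_mul', sq_sqrt (by positivity), sq_sqrt (by positivity)]
    nlinarith [mul_le_mul hx2 (by linarith : x ^ 2 + 12 ≤ u ^ 2 + 12) (by positivity)
      (by positivity)]
  have hts : √(x ^ 2 + 4) ^ 3 ≤ 8 * √(x ^ 2 + 1) :=
    (pow_le_pow_iff_left₀ (by positivity) (by positivity) two_ne_zero).1 hsq
  rw [sub_nonneg, div_le_div_iff₀ hs (by positivity)]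
  linarith

theorem stmt_17 :
    ∀ u ∈ Set.Ioo (0:ℝ) 1,
      u / 2 + u / (2 * Real.sqrt (u ^ 2 + 1)) ≤ Real.arsinh u ∧
      Real.arsinh u ≤ 2 * u / Real.sqrt (u ^ 2 + 4) := by
  rintro u ⟨hu0, hu1⟩
  have hu2 : u ^ 2 ≤ 1 := by nlinarith
  exact ⟨div_two_add_div_le_arsinh hu0.le (by nlinarith),
    arsinh_le_two_mul_div_sqrt hu0.le (by nlinarith)⟩
end

section
/- For fixed a ∈ (0,1), the function u ↦ √(1-au²)/(1-u²) is convex, positive, and increasing on (0,1); consequently, for each fixed φ, u ↦ √(1-u² sin²φ)/(1-u²) is convex on (0,1), and hence v(z)/z = (2/π)∫₀^{π/2} √(1-z²sin²φ)/(1-z²) dφ is convex in z on (0,1). -/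
/-!
On `[0, 1)` factor `√(1 - c u²) / (1 - u²)` as `(1 - c u²) / (1 - u²) · (1 - c u²)^(-1/2)`.
For `0 ≤ c ≤ 1` the first factor is `c + (1 - c) / (1 - u²)` and the second is the reciprocal of
the positive concave function `√(1 - c u²)`; both are nonnegative, convex and increasing, so their
product is convex and increasing. Taking `c = sin² φ` and integrating over `φ` gives the convexity
of `v(z)/z`.
-/

open Set Real

variable {E : Type*} [AddCommMonoid E] [Module ℝ E] {s : Set E} {f : E → ℝ}

theorem ConcaveOn.convexOn_inv (hf : ConcaveOn ℝ s f) (hpos : ∀ x ∈ s, 0 < f x) :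
    ConvexOn ℝ s fun x => (f x)⁻¹ := by
  refine ⟨hf.1, fun x hx y hy a b ha hb hab => ?_⟩
  have hmean : 0 < a • f x + b • f y := convex_Ioi (0 : ℝ) (hpos x hx) (hpos y hy) ha hb hab
  calc (f (a • x + b • y))⁻¹
      ≤ (a • f x + b • f y)⁻¹ := inv_anti₀ hmean (hf.2 hx hy ha hb hab)
    _ ≤ a • (f x)⁻¹ + b • (f y)⁻¹ := by
      simpa using (convexOn_zpow (𝕜 := ℝ) (-1)).2 (hpos x hx) (hpos y hy) ha hb hab

theorem ConcaveOn.sqrt (hf : ConcaveOn ℝ s f) (hnonneg : ∀ x ∈ s, 0 ≤ f x) :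
    ConcaveOn ℝ s fun x => √(f x) := by
  refine ⟨hf.1, fun x hx y hy a b ha hb hab => ?_⟩
  calc a • √(f x) + b • √(f y)
      ≤ √(a • f x + b • f y) :=
        strictConcaveOn_sqrt.concaveOn.2 (hnonneg x hx) (hnonneg y hy) ha hb hab
    _ ≤ √(f (a • x + b • y)) := Real.sqrt_le_sqrt (hf.2 hx hy ha hb hab)

theorem ConvexOn.intervalIntegral {F : E → ℝ → ℝ} {a b : ℝ} {μ : MeasureTheory.Measure ℝ}
    (hab : a ≤ b) (hF : ∀ φ ∈ Icc a b, ConvexOn ℝ s (F · φ))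
    (hint : ∀ u ∈ s, IntervalIntegrable (F u) μ a b) :
    ConvexOn ℝ s fun u => ∫ φ in a..b, F u φ ∂μ := by
  refine ⟨(hF a (left_mem_Icc.2 hab)).1, fun x hx y hy α β hα hβ hαβ => ?_⟩
  have hxy := (hF a (left_mem_Icc.2 hab)).1 hx hy hα hβ hαβ
  simp only [smul_eq_mul]
  calc ∫ φ in a..b, F (α • x + β • y) φ ∂μ
      ≤ ∫ φ in a..b, (α * F x φ + β * F y φ) ∂μ :=
        intervalIntegral.integral_mono_on hab (hint _ hxy)
          (((hint x hx).const_mul α).add ((hint y hy).const_mul β))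
          fun φ hφ => (hF φ hφ).2 hx hy hα hβ hαβ
    _ = α * (∫ φ in a..b, F x φ ∂μ) + β * ∫ φ in a..b, F y φ ∂μ := by
      rw [intervalIntegral.integral_add ((hint x hx).const_mul α) ((hint y hy).const_mul β),
        intervalIntegral.integral_const_mul, intervalIntegral.integral_const_mul]

section

variable {c : ℝ}

theorem concaveOn_one_sub_mul_sq (hc : 0 ≤ c) : ConcaveOn ℝ univ fun u : ℝ => 1 - c * u ^ 2 :=
  (((Even.convexOn_pow even_two).smul hc).neg.add_const 1).congr fun u _ => by
    simp only [Pi.add_apply, Pi.neg_apply, smul_eq_mul]; ring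

theorem one_sub_mul_sq_pos (hc : c ≤ 1) {u : ℝ} (hu : u ∈ Ioo (-1) 1) : 0 < 1 - c * u ^ 2 := by
  have : u ^ 2 < 1 := by nlinarith [hu.1, hu.2]
  nlinarith [sq_nonneg u]

theorem convexOn_inv_one_sub_sq : ConvexOn ℝ (Ioo (-1) 1) fun u : ℝ => (1 - u ^ 2)⁻¹ := by
  simpa using ((concaveOn_one_sub_mul_sq zero_le_one).subset (subset_univ _)
    (convex_Ioo _ _)).convexOn_inv fun u hu => one_sub_mul_sq_pos le_rfl hu

theorem convexOn_inv_sqrt_one_sub_mul_sq (hc0 : 0 ≤ c) (hc1 : c ≤ 1) :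
    ConvexOn ℝ (Ioo (-1) 1) fun u : ℝ => (√(1 - c * u ^ 2))⁻¹ :=
  (((concaveOn_one_sub_mul_sq hc0).subset (subset_univ _) (convex_Ioo _ _)).sqrt
    fun _ hu => (one_sub_mul_sq_pos hc1 hu).le).convexOn_inv
    fun _ hu => Real.sqrt_pos.2 (one_sub_mul_sq_pos hc1 hu)

theorem monotoneOn_inv_sqrt_one_sub_mul_sq (hc0 : 0 ≤ c) (hc1 : c ≤ 1) :
    MonotoneOn (fun u : ℝ => (√(1 - c * u ^ 2))⁻¹) (Ico 0 1) := by
  intro u hu v hv huv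
  have hv' : v ∈ Ioo (-1) 1 := ⟨by linarith [hv.1], hv.2⟩
  refine inv_anti₀ (Real.sqrt_pos.2 (one_sub_mul_sq_pos hc1 hv')) (Real.sqrt_le_sqrt ?_)
  nlinarith [mul_le_mul_of_nonneg_left (pow_le_pow_left₀ hu.1 huv 2) hc0]

theorem convexOn_one_sub_mul_sq_div_one_sub_sq (hc : c ≤ 1) :
    ConvexOn ℝ (Ioo (-1) 1) fun u : ℝ => (1 - c * u ^ 2) / (1 - u ^ 2) :=
  ((convexOn_inv_one_sub_sq.smul (sub_nonneg.2 hc)).add_const c).congr fun u hu => by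
    have : 0 < 1 - u ^ 2 := by simpa using one_sub_mul_sq_pos le_rfl hu
    simp only [Pi.add_apply, smul_eq_mul]
    field_simp
    ring

theorem monotoneOn_one_sub_mul_sq_div_one_sub_sq (hc : c ≤ 1) :
    MonotoneOn (fun u : ℝ => (1 - c * u ^ 2) / (1 - u ^ 2)) (Ico 0 1) := by
  intro u hu v hv huv
  have hu' : 0 < 1 - u ^ 2 := by nlinarith [hu.1, hu.2]
  have hv' : 0 < 1 - v ^ 2 := by nlinarith [hv.1, hv.2]
  rw [div_le_div_iff₀ hu' hv']
  nlinarith [mul_le_mul_of_nonneg_left (pow_le_pow_left₀ hu.1 huv 2) (sub_nonneg.2 hc)]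

theorem sqrt_div_eq_div_mul_inv_sqrt {x y : ℝ} (hx : 0 < x) : √x / y = x / y * (√x)⁻¹ := by
  have := Real.sqrt_pos.2 hx
  field_simp
  rw [Real.sq_sqrt hx.le]

theorem one_sub_mul_sq_div_one_sub_sq_pos (hc : c ≤ 1) {u : ℝ} (hu : u ∈ Ioo (-1) 1) :
    0 < (1 - c * u ^ 2) / (1 - u ^ 2) :=
  div_pos (one_sub_mul_sq_pos hc hu) (by simpa using one_sub_mul_sq_pos le_rfl hu)

theorem eqOn_sqrt_one_sub_mul_sq_div_one_sub_sq (hc : c ≤ 1) :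
    EqOn ((fun u : ℝ => (1 - c * u ^ 2) / (1 - u ^ 2)) * fun u => (√(1 - c * u ^ 2))⁻¹)
      (fun u => √(1 - c * u ^ 2) / (1 - u ^ 2)) (Ioo (-1) 1) :=
  fun _ hu => (sqrt_div_eq_div_mul_inv_sqrt (one_sub_mul_sq_pos hc hu)).symm

theorem convexOn_sqrt_one_sub_mul_sq_div_one_sub_sq (hc0 : 0 ≤ c) (hc1 : c ≤ 1) :
    ConvexOn ℝ (Ico 0 1) fun u : ℝ => √(1 - c * u ^ 2) / (1 - u ^ 2) := by
  have hsub : Ico (0 : ℝ) 1 ⊆ Ioo (-1) 1 := Ico_subset_Ioo_left (by norm_num)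
  refine (((convexOn_one_sub_mul_sq_div_one_sub_sq hc1).subset hsub (convex_Ico 0 1)).mul
    ((convexOn_inv_sqrt_one_sub_mul_sq hc0 hc1).subset hsub (convex_Ico 0 1))
    (fun u hu => (one_sub_mul_sq_div_one_sub_sq_pos hc1 (hsub hu)).le)
    (fun _ _ => by positivity)
    ((monotoneOn_one_sub_mul_sq_div_one_sub_sq hc1).monovaryOn
      (monotoneOn_inv_sqrt_one_sub_mul_sq hc0 hc1))).congr
    ((eqOn_sqrt_one_sub_mul_sq_div_one_sub_sq hc1).mono hsub)

theorem monotoneOn_sqrt_one_sub_mul_sq_div_one_sub_sq (hc0 : 0 ≤ c) (hc1 : c ≤ 1) :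
    MonotoneOn (fun u : ℝ => √(1 - c * u ^ 2) / (1 - u ^ 2)) (Ico 0 1) := by
  have hsub : Ico (0 : ℝ) 1 ⊆ Ioo (-1) 1 := Ico_subset_Ioo_left (by norm_num)
  refine ((monotoneOn_one_sub_mul_sq_div_one_sub_sq hc1).mul
    (monotoneOn_inv_sqrt_one_sub_mul_sq hc0 hc1)
    (fun u hu => (one_sub_mul_sq_div_one_sub_sq_pos hc1 (hsub hu)).le)
    (fun _ _ => by positivity)).congr
    ((eqOn_sqrt_one_sub_mul_sq_div_one_sub_sq hc1).mono hsub)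

end

theorem stmt_18 :
    (∀ a ∈ Set.Ioo (0:ℝ) 1,
      ConvexOn ℝ (Set.Ioo 0 1) (fun u => Real.sqrt (1 - a * u ^ 2) / (1 - u ^ 2)) ∧
      (∀ u ∈ Set.Ioo (0:ℝ) 1, 0 < Real.sqrt (1 - a * u ^ 2) / (1 - u ^ 2)) ∧
      MonotoneOn (fun u => Real.sqrt (1 - a * u ^ 2) / (1 - u ^ 2)) (Set.Ioo 0 1)) ∧
    (∀ φ : ℝ,
      ConvexOn ℝ (Set.Ioo 0 1)
        (fun u => Real.sqrt (1 - u ^ 2 * Real.sin φ ^ 2) / (1 - u ^ 2))) ∧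
    ConvexOn ℝ (Set.Ioo 0 1)
      (fun z => (2 / Real.pi) *
        ∫ φ in (0:ℝ)..(Real.pi / 2),
          Real.sqrt (1 - z ^ 2 * Real.sin φ ^ 2) / (1 - z ^ 2)) := by
  have hconvex {c : ℝ} (hc0 : 0 ≤ c) (hc1 : c ≤ 1) :=
    (convexOn_sqrt_one_sub_mul_sq_div_one_sub_sq hc0 hc1).subset Ioo_subset_Ico_self
      (convex_Ioo 0 1)
  have hkernel (φ : ℝ) : ConvexOn ℝ (Ioo 0 1)
      fun u : ℝ => √(1 - u ^ 2 * sin φ ^ 2) / (1 - u ^ 2) :=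
    (hconvex (sq_nonneg _) (sin_sq_le_one φ)).congr fun u _ => by simp only [mul_comm]
  refine ⟨fun a ha => ⟨hconvex ha.1.le ha.2.le, fun u hu => ?_,
    (monotoneOn_sqrt_one_sub_mul_sq_div_one_sub_sq ha.1.le ha.2.le).mono Ioo_subset_Ico_self⟩,
    hkernel, ?_⟩
  · have hu' : u ∈ Ioo (-1) 1 := Ioo_subset_Ioo_left (by norm_num) hu
    exact div_pos (Real.sqrt_pos.2 (one_sub_mul_sq_pos ha.2.le hu'))
      (sub_pos.2 (pow_lt_one₀ hu.1.le hu.2 two_ne_zero))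
  · exact (ConvexOn.intervalIntegral (by positivity) (fun φ _ => hkernel φ)
      fun z _ => (by fun_prop : Continuous _).intervalIntegrable _ _).smul (by positivity)
end

section
/- For positive reals x ≠ y, the logarithmic mean L(x,y) = (x-y)/(log x - log y) satisfies 1/L(x,y) = ∫₀¹ dt/H_t(x,y), where H_t(x,y) = H((x+y)/2 + t(x-y)/2, (x+y)/2 - t(x-y)/2) and H(a,b) = 2ab/(a+b) is the harmonic mean. -/
/-!
Since `1 / H(a, b) = (a⁻¹ + b⁻¹) / 2`, the integrand is `(aₜ⁻¹ + bₜ⁻¹) / 2` with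
`aₜ, bₜ = (x + y) / 2 ± t (x - y) / 2`, and `(x - y) / 2 · (aₜ⁻¹ + bₜ⁻¹)` is the derivative of
`log aₜ - log bₜ`, which runs from `0` at `t = 0` to `log x - log y` at `t = 1`.
-/

open Real Set intervalIntegral

lemma one_div_harmonic_mean {a b : ℝ} (ha : a ≠ 0) (hb : b ≠ 0) :
    1 / (2 * a * b / (a + b)) = (a⁻¹ + b⁻¹) / 2 := by
  rw [one_div_div]
  field_simp
  ring

lemma midpoint_add_mul_pos_and_sub_mul_pos {x y t : ℝ} (hx : 0 < x) (hy : 0 < y)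
    (ht : t ∈ Icc (0 : ℝ) 1) :
    0 < (x + y) / 2 + t * (x - y) / 2 ∧ 0 < (x + y) / 2 - t * (x - y) / 2 := by
  obtain ⟨ht₀, ht₁⟩ := ht
  constructor <;> nlinarith [mul_nonneg ht₀ hx.le, mul_nonneg ht₀ hy.le,
    mul_nonneg (sub_nonneg.mpr ht₁) hx.le, mul_nonneg (sub_nonneg.mpr ht₁) hy.le]

lemma hasDerivAt_log_midpoint_add_mul_sub_log {x y t : ℝ}
    (hp : (x + y) / 2 + t * (x - y) / 2 ≠ 0) (hq : (x + y) / 2 - t * (x - y) / 2 ≠ 0) :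
    HasDerivAt
      (fun s => log ((x + y) / 2 + s * (x - y) / 2) - log ((x + y) / 2 - s * (x - y) / 2))
      ((x - y) / 2 * (((x + y) / 2 + t * (x - y) / 2)⁻¹ + ((x + y) / 2 - t * (x - y) / 2)⁻¹))
      t := by
  have hlin : HasDerivAt (fun s => s * (x - y) / 2) ((x - y) / 2) t := by
    simpa using ((hasDerivAt_id t).mul_const (x - y)).div_const 2
  refine (((hlin.const_add _).log hp).sub ((hlin.const_sub _).log hq)).congr_deriv ?_
  ring

lemma integral_inv_midpoint_add_mul_add_inv {x y : ℝ} (hx : 0 < x) (hy : 0 < y) (hxy : x ≠ y) :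
    ∫ t in (0:ℝ)..1,
      (((x + y) / 2 + t * (x - y) / 2)⁻¹ + ((x + y) / 2 - t * (x - y) / 2)⁻¹) / 2 =
      (log x - log y) / (x - y) := by
  have hpos : ∀ t ∈ uIcc (0:ℝ) 1,
      0 < (x + y) / 2 + t * (x - y) / 2 ∧ 0 < (x + y) / 2 - t * (x - y) / 2 := by
    intro t ht
    rw [uIcc_of_le zero_le_one] at ht
    exact midpoint_add_mul_pos_and_sub_mul_pos hx hy ht
  have hderiv : ∀ t ∈ uIcc (0:ℝ) 1, HasDerivAt
      (fun s => (log ((x + y) / 2 + s * (x - y) / 2) - log ((x + y) / 2 - s * (x - y) / 2)) /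
        (x - y))
      ((((x + y) / 2 + t * (x - y) / 2)⁻¹ + ((x + y) / 2 - t * (x - y) / 2)⁻¹) / 2) t := by
    intro t ht
    obtain ⟨hp, hq⟩ := hpos t ht
    refine ((hasDerivAt_log_midpoint_add_mul_sub_log hp.ne' hq.ne').div_const _).congr_deriv ?_
    field_simp
  have hcont : ContinuousOn
      (fun t => (((x + y) / 2 + t * (x - y) / 2)⁻¹ + ((x + y) / 2 - t * (x - y) / 2)⁻¹) / 2)
      (uIcc 0 1) := by
    exact ((ContinuousOn.inv₀ (by fun_prop) fun t ht => (hpos t ht).1.ne').add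
      (ContinuousOn.inv₀ (by fun_prop) fun t ht => (hpos t ht).2.ne')).div_const 2
  rw [integral_eq_sub_of_hasDerivAt hderiv hcont.intervalIntegrable]
  simp only [zero_mul, zero_div, add_zero, sub_zero, sub_self, one_mul]
  congr 3 <;> ring

theorem stmt_19 (x y : ℝ) (hx : 0 < x) (hy : 0 < y) (hxy : x ≠ y) :
    1 / ((x - y) / (Real.log x - Real.log y)) =
      ∫ t in (0:ℝ)..1,
        1 / (2 * ((x + y) / 2 + t * (x - y) / 2) * ((x + y) / 2 - t * (x - y) / 2) /
          (((x + y) / 2 + t * (x - y) / 2) + ((x + y) / 2 - t * (x - y) / 2))) := by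
  rw [one_div_div, ← integral_inv_midpoint_add_mul_add_inv hx hy hxy]
  refine integral_congr fun t ht => ?_
  rw [uIcc_of_le zero_le_one] at ht
  obtain ⟨hp, hq⟩ := midpoint_add_mul_pos_and_sub_mul_pos hx hy ht
  exact (one_div_harmonic_mean hp.ne' hq.ne').symm
end
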